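/- arXiv:2402.17240 — 2 statements merged into one kernel-verified Lean document; each statement's English description precedes it below -/
import Mathlib

section
/- Let G be a finite nilpotent group acting transitively and faithfully on a finite set Ω, and let H be a Hall subgroup of G. Then G permutes the set of H-orbits on Ω (i.e., for every g ∈ G and every H-orbit Δ, the set Δ^g is again an H-orbit), and the kernel of this action of G on the set of H-orbits is exactly H: an element g ∈ G maps every H-orbit to itself if and only if g ∈ H. -/
/-!
A Hall subgroup `H` of a finite nilpotent group contains the normal Sylow `p`-subgroup for every
prime `p ∣ |H|`, hence so does its normal core, which is therefore all of `H`. As `H` is normal,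
`g` maps the orbit `H • α` to `H • (g • α)`, so `G` permutes the `H`-orbits. If the kernel of this
action were larger than `H`, it would contain an element `z` of prime order `q ∤ |H|`. Such a `z`
lies in a normal Sylow `q`-subgroup meeting `H` trivially, so it centralises `H`. Writing
`z • α = h • α` with `h ∈ H`, we get `h ^ q • α = z ^ q • α = α`, and as `q` is prime to the order
of `h`, `h • α = α`. So `z` acts trivially, contradicting faithfulness.
-/

open MulAction Pointwise

section

variable {G : Type*} [Group G]

theorem IsPGroup.le_of_normal_of_not_dvd_index {p : ℕ} [Fact p.Prime] {P H : Subgroup G}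
    (hP : IsPGroup p P) [P.Normal] (hp : ¬p ∣ H.index) : P ≤ H := by
  -- `P` fixes a coset `g • H`, so `g⁻¹ P g = P ≤ H`.
  obtain ⟨q, hq⟩ := hP.nonempty_fixed_point_of_prime_not_dvd_card (G ⧸ H) hp
  induction q using QuotientGroup.induction_on with | H g => ?_
  intro x hx
  have hu : g * x⁻¹ * g⁻¹ ∈ P := ‹P.Normal›.conj_mem _ (P.inv_mem hx) g
  have hfix := QuotientGroup.eq.mp (mem_fixedPoints.mp hq ⟨_, hu⟩)
  simpa [mul_assoc] using hfix

namespace Subgroup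

theorem normal_of_coprime_card_index [Finite G] [Group.IsNilpotent G] {H : Subgroup G}
    (hH : (Nat.card H).Coprime H.index) : H.Normal := by
  suffices H.normalCore.relIndex H = 1 by
    rw [← H.normalCore_le.antisymm (relIndex_eq_one.mp this)]
    infer_instance
  refine Nat.eq_one_iff_not_exists_prime_dvd.mpr fun p hp hpC => ?_
  have := Fact.mk hp
  have hpH : p ∣ Nat.card H := hpC.trans (relIndex_dvd_card _ _)
  have hpindex : ¬p ∣ H.index := fun h => hp.one_lt.ne' (Nat.eq_one_of_dvd_coprimes hH hpH h)
  let P : Sylow p G := default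
  have hPH : (P : Subgroup G) ≤ H.normalCore :=
    normal_le_normalCore.mpr (P.isPGroup'.le_of_normal_of_not_dvd_index hpindex)
  exact P.not_dvd_index ((hpC.trans (relIndex_dvd_index_of_le H.normalCore_le)).trans
    (index_dvd_of_le hPH))

theorem le_of_forall_orderOf_prime_dvd_card [Finite G] {H K : Subgroup G}
    (hH : (Nat.card H).Coprime H.index) (hHK : H ≤ K)
    (hK : ∀ z ∈ K, (orderOf z).Prime → orderOf z ∣ Nat.card H) : K ≤ H := by
  refine relIndex_eq_one.mp (Nat.eq_one_iff_not_exists_prime_dvd.mpr fun q hq hqK => ?_)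
  have := Fact.mk hq
  obtain ⟨z, hz⟩ := exists_prime_orderOf_dvd_card' q (hqK.trans (relIndex_dvd_card H K))
  rw [← orderOf_coe] at hz
  have hqH : q ∣ Nat.card H := hz ▸ hK z z.2 (hz ▸ hq)
  have hqindex : q ∣ H.index := hqK.trans (relIndex_dvd_index_of_le hHK)
  exact hq.one_lt.ne' (Nat.eq_one_of_dvd_coprimes hH hqH hqindex)

theorem commute_of_orderOf_prime_not_dvd_card [Finite G] [Group.IsNilpotent G] {H : Subgroup G}
    [H.Normal] {z h : G} (hz : (orderOf z).Prime) (hzH : ¬orderOf z ∣ Nat.card H) (hh : h ∈ H) :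
    Commute z h := by
  have := Fact.mk hz
  have hzp : IsPGroup (orderOf z) (zpowers z) :=
    .of_card (n := 1) (by rw [Nat.card_zpowers, pow_one])
  obtain ⟨Q, hzQ⟩ := hzp.exists_le_sylow
  obtain ⟨k, hk⟩ := Q.isPGroup'.exists_card_eq
  have hcop : (Nat.card Q).Coprime (Nat.card H) :=
    hk ▸ ((Nat.Prime.coprime_iff_not_dvd hz).mpr hzH).pow_left k
  have hdisj : Disjoint (Q : Subgroup G) H := disjoint_of_coprime_natCard hcop
  exact commute_of_normal_of_disjoint _ _ inferInstance ‹_› hdisj z h (hzQ (mem_zpowers z)) hh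

end Subgroup

namespace MulAction

variable {Ω : Type*} [MulAction G Ω]

theorem smul_eq_self_of_smul_mem_orbit {H : Subgroup G} {z : G} {α : Ω}
    (hcomm : ∀ h ∈ H, Commute z h) (hcop : (orderOf z).Coprime (Nat.card H))
    (hα : z • α ∈ orbit H α) : z • α = α := by
  obtain ⟨⟨h, hh⟩, hhα⟩ := hα
  have hy : z⁻¹ * h ∈ stabilizer G α := by
    rw [mem_stabilizer_iff, mul_smul]
    exact inv_smul_eq_iff.mpr hhα
  -- `h = z * (z⁻¹ * h)` is a product of commuting factors, and `z ^ orderOf z = 1`.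
  have hpow : h ^ orderOf z = (z⁻¹ * h) ^ orderOf z := by
    rw [← one_mul ((z⁻¹ * h) ^ orderOf z), ← pow_orderOf_eq_one z,
      ← ((Commute.refl z).inv_right.mul_right (hcomm h hh)).mul_pow, mul_inv_cancel_left]
  obtain ⟨m, hm⟩ := exists_pow_eq_self_of_coprime
    (hcop.coprime_dvd_right (H.orderOf_dvd_natCard hh))
  have hhS : h ∈ stabilizer G α := hm ▸ pow_mem (hpow ▸ pow_mem hy _) m
  simpa using mul_mem hhS (inv_mem hy)

def orbitsKernel (H : Subgroup G) (Ω : Type*) [MulAction G Ω] : Subgroup G :=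
  ⨅ α : Ω, stabilizer G (orbit H α)

theorem mem_orbitsKernel_iff {H : Subgroup G} [H.Normal] {g : G} :
    g ∈ orbitsKernel H Ω ↔ ∀ α : Ω, g • α ∈ orbit H α := by
  simp only [orbitsKernel, Subgroup.mem_iInf, mem_stabilizer_iff, smul_orbit_eq_orbit_smul,
    orbit_eq_iff]

theorem orbitsKernel_eq [Finite G] [Group.IsNilpotent G] [FaithfulSMul G Ω] {H : Subgroup G}
    (hH : (Nat.card H).Coprime H.index) : orbitsKernel H Ω = H := by
  have := H.normal_of_coprime_card_index hH
  have hle : H ≤ orbitsKernel H Ω := fun h hh => mem_orbitsKernel_iff.mpr fun α => ⟨⟨h, hh⟩, rfl⟩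
  refine le_antisymm (H.le_of_forall_orderOf_prime_dvd_card hH hle fun z hz hzp => ?_) hle
  by_contra hzH
  have hfix (α : Ω) : z • α = α :=
    smul_eq_self_of_smul_mem_orbit (fun h => H.commute_of_orderOf_prime_not_dvd_card hzp hzH)
      ((Nat.Prime.coprime_iff_not_dvd hzp).mpr hzH) (mem_orbitsKernel_iff.mp hz α)
  have hz1 : z = 1 := eq_of_smul_eq_smul fun α => by rw [hfix, one_smul]
  exact Nat.not_prime_one (by rwa [hz1, orderOf_one] at hzp)

end MulAction

end

theorem hall_orbit_action_kernel_general {G : Type*} [Group G] [Finite G]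
    (hnil : Group.IsNilpotent G) {Ω : Type*} [MulAction G Ω] [FaithfulSMul G Ω]
    (H : Subgroup G) (hHall : Nat.Coprime (Nat.card ↥H) H.index) :
    (∀ (g : G) (α : Ω), ∃ β : Ω,
        (fun x : Ω => g • x) '' MulAction.orbit H α = MulAction.orbit H β) ∧
      (∀ g : G,
        (∀ α : Ω, (fun x : Ω => g • x) '' MulAction.orbit H α = MulAction.orbit H α)
          ↔ g ∈ H) := by
  have : H.Normal := H.normal_of_coprime_card_index hHall
  refine ⟨fun g α => ⟨g • α, by rw [Set.image_smul, smul_orbit_eq_orbit_smul]⟩, fun g => ?_⟩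
  simp only [Set.image_smul, ← mem_stabilizer_iff, ← Subgroup.mem_iInf]
  exact SetLike.ext_iff.mp (orbitsKernel_eq (Ω := Ω) hHall) g

/-- If a finite nilpotent group `G` acts transitively and faithfully on a finite set `Ω`
and `H` is a Hall subgroup of `G`, then `G` permutes the `H`-orbits, and the kernel of
this action is exactly `H`. -/
theorem hall_orbit_action_kernel {G : Type*} [Group G] [Finite G]
    (hnil : Group.IsNilpotent G) {Ω : Type*} [Finite Ω] [MulAction G Ω] [FaithfulSMul G Ω]
    [MulAction.IsPretransitive G Ω]
    (H : Subgroup G) (hHall : Nat.Coprime (Nat.card ↥H) H.index) :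
    (∀ (g : G) (α : Ω), ∃ β : Ω,
        (fun x : Ω => g • x) '' MulAction.orbit H α = MulAction.orbit H β) ∧
      (∀ g : G,
        (∀ α : Ω, (fun x : Ω => g • x) '' MulAction.orbit H α = MulAction.orbit H α)
          ↔ g ∈ H) :=
  hall_orbit_action_kernel_general hnil H hHall
end

section
/- Let G be a finite abelian group with |G| > 1. Then G is totally (n(G)+1)-closed but not totally n(G)-closed. -/
/-!
Write `n = rank G`. A permutation `x` lies in the `k`-closure of a faithful image of `G` iff every
`k` of the cosets `{g | g ω = x ω} = a_ω Stab(ω)` meet, and `x` is in the image iff all of them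
meet. So the upper bound is a Helly theorem for cosets with parameter `n + 1`. Bezout reduces it
to `p`-groups of rank `≤ n`. There, modulo the common core, the elements of order dividing `p`
form a group of order `≤ p ^ n`, so `n` of the subgroups already intersect in the core, and one
more coset pins down a common point.

For the lower bound, the structure theorem together with a colouring argument gives a prime `q`
occurring in `n` cyclic factors `ℤ/q^e`. The `n` coordinate hyperplanes of these factors and the
coset `{Σ xᵢ ≡ 1 mod q}` of the remaining coordinates form `n + 1` cosets, any `n` of which meet
but not all of them.
-/

/-- The `k`-closure of a subgroup `G ≤ Sym(Ω)` (Wielandt's characterization): the set of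
permutations `x` such that for every `k`-tuple there is a `g ∈ G` agreeing with `x` on it. -/
def kClosure {Ω : Type*} (k : ℕ) (G : Subgroup (Equiv.Perm Ω)) : Subgroup (Equiv.Perm Ω) where
  carrier := {x | ∀ α : Fin k → Ω, ∃ g ∈ G, ∀ i, x (α i) = g (α i)}
  one_mem' := fun α => ⟨1, G.one_mem, fun _ => rfl⟩
  mul_mem' := by
    intro x y hx hy α
    obtain ⟨g, hg, hgy⟩ := hy α
    obtain ⟨g', hg', hgx⟩ := hx (fun i => y (α i))
    refine ⟨g' * g, G.mul_mem hg' hg, fun i => ?_⟩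
    simp only [Equiv.Perm.mul_apply]
    rw [hgx i, hgy i]
  inv_mem' := by
    intro x hx α
    obtain ⟨g, hg, hgx⟩ := hx (fun i => x⁻¹ (α i))
    refine ⟨g⁻¹, G.inv_mem hg, fun i => ?_⟩
    have h := hgx i
    simp only [Equiv.Perm.coe_inv, Equiv.apply_symm_apply] at h
    exact Equiv.Perm.eq_inv_iff_eq.mpr h.symm

/-- A finite group is totally `k`-closed if the image of every faithful permutation
representation on a finite set equals its own `k`-closure. -/
def IsTotallyKClosed (k : ℕ) (G : Type*) [Group G] : Prop :=
  ∀ (Ω : Type) [Fintype Ω] (φ : G →* Equiv.Perm Ω), Function.Injective φ →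
    kClosure k φ.range = φ.range

open Subgroup

theorem le_kClosure {Ω : Type*} (k : ℕ) (H : Subgroup (Equiv.Perm Ω)) : H ≤ kClosure k H :=
  fun g hg _ => ⟨g, hg, fun _ => rfl⟩

theorem mem_kClosure_iff_finset {Ω : Type*} {k : ℕ} {H : Subgroup (Equiv.Perm Ω)}
    {x : Equiv.Perm Ω} :
    x ∈ kClosure k H ↔ ∀ s : Finset Ω, s.card ≤ k → ∃ g ∈ H, ∀ ω ∈ s, x ω = g ω := by
  classical
  constructor
  · intro hx s hs
    rcases s.eq_empty_or_nonempty with rfl | ⟨ω₀, hω₀⟩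
    · exact ⟨1, H.one_mem, by simp⟩
    have : Nonempty s := ⟨⟨ω₀, hω₀⟩⟩
    obtain ⟨e⟩ : Nonempty (s ↪ Fin k) :=
      Function.Embedding.nonempty_of_card_le (by simpa using hs)
    obtain ⟨g, hg, hxg⟩ := hx fun i => ((Function.invFun (e : s → Fin k) i : s) : Ω)
    refine ⟨g, hg, fun ω hω => ?_⟩
    simpa [Function.leftInverse_invFun e.injective ⟨ω, hω⟩] using hxg (e ⟨ω, hω⟩)
  · intro h α
    obtain ⟨g, hg, hxg⟩ := h (Finset.univ.image α) (Finset.card_image_le.trans (by simp))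
    exact ⟨g, hg, fun i => hxg (α i) (by simp)⟩

def CosetHelly (k : ℕ) (G : Type*) [Group G] : Prop :=
  ∀ {ι : Type} (a : ι → G) (K : ι → Subgroup G),
    (∀ s : Finset ι, s.card ≤ k → ∃ x, ∀ i ∈ s, (a i)⁻¹ * x ∈ K i) →
      ∃ x, ∀ i, (a i)⁻¹ * x ∈ K i

theorem isTotallyKClosed_of_cosetHelly {G : Type*} [Group G] {k : ℕ} (hk : 0 < k)
    (hG : CosetHelly k G) : IsTotallyKClosed k G := by
  intro Ω _ φ _
  refine le_antisymm (fun x hx => ?_) (le_kClosure k _)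
  rw [mem_kClosure_iff_finset] at hx
  have hpoint : ∀ ω, ∃ g, φ g ω = x ω := fun ω => by
    obtain ⟨_, ⟨g, rfl⟩, hg⟩ := hx {ω} (by rw [Finset.card_singleton]; exact hk)
    exact ⟨g, (hg ω (Finset.mem_singleton_self ω)).symm⟩
  choose a ha using hpoint
  let K : Ω → Subgroup G := fun ω => (MulAction.stabilizer (Equiv.Perm Ω) ω).comap φ
  have hK : ∀ ω y, (a ω)⁻¹ * y ∈ K ω ↔ φ y ω = x ω := fun ω y => by
    simp [K, MulAction.mem_stabilizer_iff, Equiv.Perm.smul_def, Equiv.Perm.mul_apply,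
      Equiv.symm_apply_eq, ha]
  obtain ⟨y, hy⟩ := hG a K fun s hs => by
    obtain ⟨_, ⟨y, rfl⟩, hxy⟩ := hx s hs
    exact ⟨y, fun ω hω => (hK ω y).2 (hxy ω hω).symm⟩
  exact ⟨y, Equiv.ext fun ω => (hK ω y).1 (hy ω)⟩

theorem exists_forall_inv_mul_mem_of_iInf_le {G : Type*} [Group G] {ι : Type*}
    (a : ι → G) (K : ι → Subgroup G) (s : Finset ι) (hs : ∀ i, ⨅ j ∈ s, K j ≤ K i)
    (h : ∀ t : Finset ι, t.card ≤ s.card + 1 → ∃ x, ∀ i ∈ t, (a i)⁻¹ * x ∈ K i) :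
    ∃ x, ∀ i, (a i)⁻¹ * x ∈ K i := by
  classical
  obtain ⟨x, hx⟩ := h s (Nat.le_succ _)
  refine ⟨x, fun i => ?_⟩
  obtain ⟨y, hy⟩ := h (insert i s) (Finset.card_insert_le i s)
  have hxy : x⁻¹ * y ∈ ⨅ j ∈ s, K j := by
    simp only [mem_iInf]
    intro j hj
    simpa [mul_assoc] using mul_mem (inv_mem (hx j hj)) (hy j (Finset.mem_insert_of_mem hj))
  simpa [mul_assoc] using mul_mem (hy i (Finset.mem_insert_self i s)) (inv_mem (hs i hxy))

theorem exists_finset_inf_iInf_eq_bot {G : Type*} [Group G] [Finite G] {ι : Type*}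
    {p : ℕ} (hp : p.Prime) (K : ι → Subgroup G) {k : ℕ} :
    ∀ {D : Subgroup G}, Nat.card D ∣ p ^ k → D ⊓ ⨅ i, K i = ⊥ →
      ∃ s : Finset ι, s.card ≤ k ∧ D ⊓ ⨅ i ∈ s, K i = ⊥ := by
  classical
  induction k with
  | zero =>
    intro D hD _
    refine ⟨∅, le_rfl, ?_⟩
    simp [D.eq_bot_of_card_eq (Nat.dvd_one.mp (by simpa using hD))]
  | succ k ih =>
    intro D hD hDK
    by_cases hle : ∀ i, D ≤ K i
    · exact ⟨∅, Nat.zero_le _, by simpa [inf_eq_left.mpr (le_iInf hle)] using hDK⟩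
    obtain ⟨i, hi⟩ := not_forall.mp hle
    have hlt : D ⊓ K i < D := inf_le_left.lt_of_ne fun h => hi (h ▸ inf_le_right)
    have hcard : Nat.card ↥(D ⊓ K i) ∣ p ^ k := by
      obtain ⟨a, ha, hDa⟩ := (Nat.dvd_prime_pow hp).mp hD
      obtain ⟨b, hb, hDb⟩ := (Nat.dvd_prime_pow hp).mp (hDa ▸ card_dvd_of_le hlt.le)
      have hba : b ≠ a := fun hba => hlt.ne (eq_of_le_of_card_ge hlt.le (by rw [hDa, hDb, hba]))
      exact hDb ▸ pow_dvd_pow p (by omega)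
    obtain ⟨s, hs, hDs⟩ := ih hcard (eq_bot_mono (inf_le_inf_right _ inf_le_left) hDK)
    refine ⟨insert i s, (Finset.card_insert_le i s).trans (by omega), ?_⟩
    rwa [Finset.iInf_insert, ← inf_assoc]

theorem card_ker_powMonoidHom_dvd {G : Type*} [CommGroup G] [Finite G] (p : ℕ) :
    Nat.card (powMonoidHom p : G →* G).ker ∣ p ^ Group.rank G := by
  let R := (powMonoidHom p : G →* G).range
  have hexp : ∀ y : G ⧸ R, y ^ p = 1 := by
    rintro ⟨g⟩
    exact (QuotientGroup.eq_one_iff _).mpr ⟨g, rfl⟩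
  rw [← index_range]
  exact (card_dvd_exponent_pow_rank' (G ⧸ R) hexp).trans (pow_dvd_pow p
    (Group.rank_le_of_surjective _ (QuotientGroup.mk'_surjective R)))

theorem IsPGroup.eq_bot_of_inf_ker_powMonoidHom {G : Type*} [CommGroup G] [Finite G] {p : ℕ}
    [Fact p.Prime] (hG : IsPGroup p G) {L : Subgroup G}
    (hL : L ⊓ (powMonoidHom p : G →* G).ker = ⊥) : L = ⊥ := by
  by_contra hne
  have hdvd : p ∣ Nat.card L :=
    ((hG.to_subgroup L).card_eq_or_dvd).resolve_left fun h => hne (L.eq_bot_of_card_eq h)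
  obtain ⟨g, hg⟩ := exists_prime_orderOf_dvd_card' p hdvd
  have hmem : (g : G) ∈ L ⊓ (powMonoidHom p : G →* G).ker := by
    refine mem_inf.mpr ⟨g.2, ?_⟩
    rw [MonoidHom.mem_ker, powMonoidHom_apply, ← hg]
    exact_mod_cast pow_orderOf_eq_one g
  rw [hL, mem_bot, OneMemClass.coe_eq_one] at hmem
  rw [hmem, orderOf_one] at hg
  exact (Fact.out : p.Prime).ne_one hg.symm

theorem IsPGroup.exists_finset_iInf_eq_bot {G : Type*} [CommGroup G] [Finite G] {p : ℕ}
    [Fact p.Prime] (hG : IsPGroup p G) {ι : Type*} (K : ι → Subgroup G)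
    (hK : ⨅ i, K i = ⊥) : ∃ s : Finset ι, s.card ≤ Group.rank G ∧ ⨅ i ∈ s, K i = ⊥ := by
  obtain ⟨s, hs, hEs⟩ := exists_finset_inf_iInf_eq_bot Fact.out K
    (card_ker_powMonoidHom_dvd p) (by rw [hK, inf_bot_eq])
  exact ⟨s, hs, hG.eq_bot_of_inf_ker_powMonoidHom (by rwa [inf_comm])⟩

theorem IsPGroup.exists_finset_iInf_eq {G : Type*} [CommGroup G] [Finite G] {p : ℕ}
    [Fact p.Prime] (hG : IsPGroup p G) {ι : Type*} (K : ι → Subgroup G) :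
    ∃ s : Finset ι, s.card ≤ Group.rank G ∧ ⨅ i ∈ s, K i = ⨅ i, K i := by
  set N := ⨅ i, K i
  let π := QuotientGroup.mk' N
  have hcomap : ∀ i, ((K i).map π).comap π = K i := fun i => by
    rw [comap_map_eq, QuotientGroup.ker_mk', sup_of_le_left (iInf_le K i)]
  have hbot : ⨅ i, (K i).map π = ⊥ := by
    rw [eq_bot_iff]
    intro y hy
    obtain ⟨x, rfl⟩ := QuotientGroup.mk'_surjective N y
    have hx := mem_iInf.mp hy
    have hxN : x ∈ N := mem_iInf.mpr fun i => hcomap i ▸ mem_comap.mpr (hx i)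
    exact (QuotientGroup.eq_one_iff x).mpr hxN
  obtain ⟨s, hs, hsbot⟩ := (hG.to_quotient N).exists_finset_iInf_eq_bot _ hbot
  refine ⟨s, hs.trans (Group.rank_le_of_surjective π (QuotientGroup.mk'_surjective N)),
    le_antisymm (fun x hx => ?_) (le_iInf₂ fun i _ => iInf_le K i)⟩
  have hπx : π x ∈ ⨅ i ∈ s, (K i).map π := by
    simp only [mem_iInf] at hx ⊢
    exact fun i hi => mem_map_of_mem π (hx i hi)
  rw [hsbot, mem_bot] at hπx
  exact (QuotientGroup.eq_one_iff x).mp hπx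

theorem IsPGroup.cosetHelly {G : Type*} [CommGroup G] [Finite G] {p : ℕ} [Fact p.Prime]
    (hG : IsPGroup p G) {n : ℕ} (hn : Group.rank G ≤ n) : CosetHelly (n + 1) G :=
  fun a K h => by
    obtain ⟨s, hs, hsK⟩ := hG.exists_finset_iInf_eq K
    exact exists_forall_inv_mul_mem_of_iInf_le a K s (fun i => hsK ▸ iInf_le K i)
      fun t ht => h t (by omega)

theorem CosetHelly.exists_forall_map_mem {G H : Type*} [Group G] [Group H] {k : ℕ}
    (hH : CosetHelly k H) {f : G →* H} (hf : Function.Surjective f) {ι : Type}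
    (a : ι → G) (K : ι → Subgroup G)
    (h : ∀ s : Finset ι, s.card ≤ k → ∃ x, ∀ i ∈ s, (a i)⁻¹ * x ∈ K i) :
    ∃ x, ∀ i, f ((a i)⁻¹ * x) ∈ (K i).map f := by
  obtain ⟨y, hy⟩ := hH (f ∘ a) (fun i => (K i).map f) fun s hs => by
    obtain ⟨x, hx⟩ := h s hs
    exact ⟨f x, fun i hi => by simpa using mem_map_of_mem f (hx i hi)⟩
  obtain ⟨x, rfl⟩ := hf y
  exact ⟨x, fun i => by simpa using hy i⟩

theorem CosetHelly.of_zpow {G : Type*} [CommGroup G] {k : ℕ} {u v : ℤ} (huv : u + v = 1)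
    (hu : CosetHelly k (zpowGroupHom u : G →* G).range)
    (hv : CosetHelly k (zpowGroupHom v : G →* G).range) : CosetHelly k G := by
  intro ι a K h
  have key : ∀ w : ℤ, CosetHelly k (zpowGroupHom w : G →* G).range →
      ∃ x, ∀ i, ((a i)⁻¹ * x) ^ w ∈ K i := fun w hw => by
    obtain ⟨x, hx⟩ := hw.exists_forall_map_mem
      (f := (zpowGroupHom w : G →* G).rangeRestrict) (MonoidHom.rangeRestrict_surjective _) a K h
    refine ⟨x, fun i => ?_⟩
    obtain ⟨y, hy, hyx⟩ := hx i
    have hyx' : y ^ w = ((a i)⁻¹ * x) ^ w := congrArg Subtype.val hyx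
    exact hyx' ▸ zpow_mem hy w
  obtain ⟨x₁, hx₁⟩ := key u hu
  obtain ⟨x₂, hx₂⟩ := key v hv
  refine ⟨x₁ ^ u * x₂ ^ v, fun i => ?_⟩
  have hsplit : (a i)⁻¹ * (x₁ ^ u * x₂ ^ v) = ((a i)⁻¹ * x₁) ^ u * ((a i)⁻¹ * x₂) ^ v := by
    rw [mul_zpow, mul_zpow, mul_mul_mul_comm, ← zpow_add, huv, zpow_one]
  rw [hsplit]
  exact mul_mem (hx₁ i) (hx₂ i)

theorem cosetHelly_of_rank_le {G : Type*} [CommGroup G] [Finite G] {n : ℕ}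
    (hn : Group.rank G ≤ n) : CosetHelly (n + 1) G := by
  induction hc : Nat.card G using Nat.strong_induction_on generalizing G with
  | _ c ih =>
  subst hc
  by_cases h1 : Nat.card G = 1
  · have := (Nat.card_eq_one_iff_unique.mp h1).1
    exact fun a K _ => ⟨1, fun i => Subsingleton.elim 1 ((a i)⁻¹ * 1) ▸ one_mem (K i)⟩
  set N := Nat.card G
  set p := N.minFac
  have hp : p.Prime := Nat.minFac_prime h1
  have := Fact.mk hp
  set P := p ^ N.factorization p
  set t := N / P
  have hPt : P * t = N := Nat.ordProj_mul_ordCompl_eq_self N p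
  have hpt : p.Coprime t := Nat.coprime_ordCompl hp Nat.card_pos.ne'
  have hexp : ∀ (g : G) (r s : ℕ) (z : ℤ), r * s = N → (g ^ ((r : ℤ) * z)) ^ s = 1 :=
    fun g r s z hrs => by
      rw [← zpow_natCast, ← zpow_mul, mul_right_comm, ← Nat.cast_mul, hrs, zpow_mul,
        zpow_natCast, pow_card_eq_one', one_zpow]
  -- Bezout for `P` and `t` splits `G` into its `p`-part and a smaller complement
  have huv : (t : ℤ) * Nat.gcdB P t + P * Nat.gcdA P t = 1 := by
    have := Nat.gcd_eq_gcd_ab P t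
    rw [Nat.Coprime.gcd_eq_one (hpt.pow_left _), Nat.cast_one] at this
    linarith
  have hpGroup : IsPGroup p (zpowGroupHom (t * Nat.gcdB P t : ℤ) : G →* G).range := by
    rintro ⟨_, g, rfl⟩
    exact ⟨N.factorization p, Subtype.ext (hexp g t P _ (by rw [mul_comm, hPt]))⟩
  have hsmall : Nat.card (zpowGroupHom (P * Nat.gcdA P t : ℤ) : G →* G).range < N := by
    obtain ⟨g, hg⟩ := exists_prime_orderOf_dvd_card' (G := G) p (Nat.minFac_dvd N)
    have hne : (zpowGroupHom (P * Nat.gcdA P t : ℤ) : G →* G).range ≠ ⊤ := fun htop => by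
      obtain ⟨h, rfl⟩ : g ∈ (zpowGroupHom (P * Nat.gcdA P t : ℤ) : G →* G).range :=
        htop ▸ mem_top g
      have hdvd : p ∣ t := hg ▸ orderOf_dvd_of_pow_eq_one (hexp h P t _ hPt)
      exact hp.ne_one (Nat.Coprime.eq_one_of_dvd hpt hdvd)
    exact (card_le_card_group _).lt_of_ne fun h => hne (card_eq_iff_eq_top _ |>.mp h)
  have hrank : Group.rank (zpowGroupHom (P * Nat.gcdA P t : ℤ) : G →* G).range ≤ n :=
    Group.rank_range_le.trans hn
  exact CosetHelly.of_zpow huv (hpGroup.cosetHelly (Group.rank_range_le.trans hn))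
    (ih _ hsmall hrank rfl)

theorem IsTotallyKClosed.of_mulEquiv {G H : Type*} [Group G] [Group H] {k : ℕ} (e : G ≃* H)
    (hG : IsTotallyKClosed k G) : IsTotallyKClosed k H := by
  intro Ω _ φ hφ
  have hrange : (φ.comp (e : G →* H)).range = φ.range := by
    rw [MonoidHom.range_comp, MonoidHom.range_eq_top.mpr e.surjective, ← MonoidHom.range_eq_map]
  have := hG Ω (φ.comp (e : G →* H)) (hφ.comp e.injective)
  rwa [hrange] at this

theorem smul_eq_smul_of_inv_mul_mem {G : Type*} [CommGroup G] {K : Subgroup G} {a b : G}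
    (h : a⁻¹ * b ∈ K) (z : G ⧸ K) : a • z = b • z := by
  induction z using QuotientGroup.induction_on with
  | H c =>
    refine QuotientGroup.eq.mpr ?_
    simpa [mul_comm a, mul_comm b, mul_assoc] using h

theorem inv_mul_mem_of_smul_one_eq {G : Type*} [CommGroup G] {K : Subgroup G} {a b : G}
    (h : a • (1 : G ⧸ K) = b • 1) : a⁻¹ * b ∈ K := by
  change ((a * 1 : G) : G ⧸ K) = ((b * 1 : G) : G ⧸ K) at h
  rwa [mul_one, mul_one, QuotientGroup.eq] at h

theorem not_isTotallyKClosed_of_cosets {G : Type} [CommGroup G] [Finite G] {ι : Type}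
    [Fintype ι] {k : ℕ} (hk : k < Fintype.card ι) (K : ι → Subgroup G) (b : ι → G)
    (hK : ⨅ i, K i = ⊥) (hmiss : ∀ i₀, ∃ g, ∀ i ≠ i₀, (b i)⁻¹ * g ∈ K i)
    (hall : ¬ ∃ g, ∀ i, (b i)⁻¹ * g ∈ K i) : ¬ IsTotallyKClosed k G := by
  classical
  intro hG
  have := Fintype.ofFinite (Σ i, G ⧸ K i)
  let φ := MulAction.toPermHom G (Σ i, G ⧸ K i)
  have hφ : Function.Injective φ := by
    refine (injective_iff_map_eq_one φ).mpr fun g hg => ?_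
    have hgK : ∀ i, g ∈ K i := fun i => by
      have := congrArg (fun σ : Equiv.Perm _ => σ ⟨i, (1 : G ⧸ K i)⟩) hg
      simpa [φ, Sigma.smul_mk] using inv_mul_mem_of_smul_one_eq (K := K i) (a := 1) (b := g)
        (by simpa [φ, Sigma.smul_mk] using this.symm)
    simpa [hK] using mem_iInf.mpr hgK
  let x : Equiv.Perm (Σ i, G ⧸ K i) := Equiv.sigmaCongrRight fun i => MulAction.toPerm (b i)
  have hx : x ∈ kClosure k φ.range := by
    rw [mem_kClosure_iff_finset]
    intro s hs
    obtain ⟨i₀, hi₀⟩ : ∃ i₀, i₀ ∉ s.image Sigma.fst := by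
      by_contra! hcov
      have := (Finset.card_le_card (fun i _ => hcov i : Finset.univ ⊆ s.image Sigma.fst)).trans
        Finset.card_image_le
      rw [Finset.card_univ] at this
      omega
    obtain ⟨g, hg⟩ := hmiss i₀
    refine ⟨φ g, ⟨g, rfl⟩, ?_⟩
    rintro ⟨i, z⟩ hiz
    have hi : i ≠ i₀ := fun h => hi₀ (Finset.mem_image.mpr ⟨_, hiz, h⟩)
    simp [x, φ, Sigma.smul_mk, smul_eq_smul_of_inv_mul_mem (hg i hi) z]
  rw [hG _ φ hφ] at hx
  obtain ⟨g, hg⟩ := hx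
  refine hall ⟨g, fun i => ?_⟩
  have := congrArg (fun σ : Equiv.Perm _ => σ ⟨i, (1 : G ⧸ K i)⟩) hg
  exact inv_mul_mem_of_smul_one_eq (by simpa [x, φ, Sigma.smul_mk] using this.symm)

theorem not_isTotallyKClosed_pi {ι : Type} [Fintype ι] {M : ι → Type}
    [∀ i, CommGroup (M i)] [∀ i, Finite (M i)] {C : Type*} [CommGroup C] {T : Finset ι}
    (hT : T.Nonempty) (χ : ∀ t : T, M t →* C) (u : ∀ t : T, M t) {c : C} (hc : c ≠ 1)
    (hu : ∀ t, χ t (u t) = c) : ¬ IsTotallyKClosed T.card (∀ i, M i) := by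
  classical
  obtain ⟨t₀, ht₀⟩ := hT
  let w : (∀ i, M i) →* C := ∏ t : T, (χ t).comp (Pi.evalMonoidHom M t)
  have hw : ∀ g, w g = ∏ t : T, χ t (g t) := fun g => by simp [w, MonoidHom.finsetProd_apply]
  let U : T → ∀ i, M i := fun t => Pi.mulSingle (t : ι) (u t)
  have hwU : ∀ t, w (U t) = c := fun t => by
    rw [hw, Fintype.prod_eq_single t fun s hst => ?_]
    · simp [U, hu]
    · simp [U, Pi.mulSingle_eq_of_ne (Subtype.coe_injective.ne hst)]
  let K : Option T → Subgroup (∀ i, M i) := fun o => o.elim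
    (w.ker ⊓ ⨅ (i) (_ : i ∉ T), (Pi.evalMonoidHom M i).ker) fun t => (Pi.evalMonoidHom M t).ker
  let b : Option T → ∀ i, M i := fun o => o.elim (U ⟨t₀, ht₀⟩) fun _ => 1
  have hKnone : ∀ g, g ∈ K none ↔ w g = 1 ∧ ∀ i ∉ T, g i = 1 := fun g => by
    simp [K]
  have hKsome : ∀ t g, g ∈ K (some t) ↔ g t = 1 := fun t g => Iff.rfl
  refine not_isTotallyKClosed_of_cosets (by simp) K b ?_ ?_ ?_
  · refine eq_bot_iff.mpr fun g hg => funext fun i => ?_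
    rw [mem_iInf] at hg
    by_cases hi : i ∈ T
    · exact (hKsome ⟨i, hi⟩ g).mp (hg (some ⟨i, hi⟩))
    · exact ((hKnone g).mp (hg none)).2 i hi
  · rintro (_ | t₁)
    · refine ⟨1, fun o ho => ?_⟩
      obtain ⟨t, rfl⟩ := Option.ne_none_iff_exists'.mp ho
      simp [hKsome, b]
    · refine ⟨U t₁, ?_⟩
      rintro (_ | t) ht
      · refine (hKnone _).mpr ⟨by simp [b, hwU], fun i hi => ?_⟩
        have hne : ∀ j ∈ T, i ≠ j := fun j hj h => hi (h ▸ hj)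
        simp [b, U, Pi.mulSingle_eq_of_ne (hne _ ht₀), Pi.mulSingle_eq_of_ne (hne _ t₁.2)]
      · have hne : (t : ι) ≠ t₁ := Subtype.coe_injective.ne fun h => ht (h ▸ rfl)
        simp [hKsome, b, U, Pi.mulSingle_eq_of_ne hne]
  · rintro ⟨g, hg⟩
    have hg1 : w g = 1 := by
      rw [hw]
      refine Finset.prod_eq_one fun t _ => ?_
      rw [show g t = 1 by simpa [hKsome, b] using hg (some t), map_one]
    apply hc
    simpa [b, hwU, hg1] using ((hKnone _).mp (hg none)).1

theorem mem_zpowers_mul_of_coprime {G : Type*} [CommGroup G] {y z : G} {a b : ℕ}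
    (hy : y ^ a = 1) (hz : z ^ b = 1) (hab : a.Coprime b) : y ∈ zpowers (y * z) := by
  refine mem_zpowers_iff.mpr ⟨b * Nat.gcdB a b, ?_⟩
  have hbez : (a : ℤ) * Nat.gcdA a b + b * Nat.gcdB a b = 1 := by
    rw [← Nat.gcd_eq_gcd_ab, hab.gcd_eq_one, Nat.cast_one]
  calc (y * z) ^ ((b : ℤ) * Nat.gcdB a b)
      = (y ^ a) ^ Nat.gcdA a b * y ^ ((b : ℤ) * Nat.gcdB a b) := by
        rw [mul_zpow, zpow_mul z, zpow_natCast, hz, hy, one_zpow, one_zpow, one_mul, mul_one]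
    _ = y := by rw [← zpow_natCast, ← zpow_mul, ← zpow_add, hbez, zpow_one]

theorem Group.rank_pi_le_of_coloring {ι : Type*} [Fintype ι] {M : ι → Type*}
    [∀ i, CommGroup (M i)] [∀ i, Finite (M i)] [∀ i, IsCyclic (M i)] {m : ℕ} (c : ι → Fin m)
    (hc : ∀ i j, i ≠ j → c i = c j → (Nat.card (M i)).Coprime (Nat.card (M j))) :
    Group.rank (∀ i, M i) ≤ m := by
  classical
  choose g hg using fun i => IsCyclic.exists_generator (α := M i)
  let v : Fin m → ∀ i, M i := fun k => ∏ j ∈ Finset.univ.filter (c · = k), Pi.mulSingle j (g j)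
  have hv : ∀ i, Pi.mulSingle i (g i) ∈ zpowers (v (c i)) := fun i => by
    have hmem : i ∈ Finset.univ.filter (c · = c i) := by simp
    rw [show v (c i) = _ from (Finset.mul_prod_erase _ _ hmem).symm]
    refine mem_zpowers_mul_of_coprime (a := Nat.card (M i))
      (b := ∏ j ∈ (Finset.univ.filter (c · = c i)).erase i, Nat.card (M j))
      (by rw [← Pi.mulSingle_pow, pow_card_eq_one', Pi.mulSingle_one]) ?_ ?_
    · rw [← Finset.prod_pow]
      refine Finset.prod_eq_one fun j hj => ?_
      obtain ⟨d, hd⟩ := Finset.dvd_prod_of_mem (fun j => Nat.card (M j)) hj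
      rw [← Pi.mulSingle_pow, hd, pow_mul, pow_card_eq_one', one_pow, Pi.mulSingle_one]
    · refine Nat.Coprime.prod_right fun j hj => ?_
      obtain ⟨hji, hj⟩ := Finset.mem_erase.mp hj
      exact hc i j (Ne.symm hji) (Finset.mem_filter.mp hj).2.symm
  refine (Group.rank_le (S := Finset.univ.image v) ?_).trans
    (Finset.card_image_le.trans (by simp))
  refine eq_top_iff.mpr fun x _ => pi_mem_of_mulSingle_mem x fun i => ?_
  obtain ⟨k, hk⟩ := mem_zpowers_iff.mp (hg i (x i))
  rw [← hk, Pi.mulSingle_zpow]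
  refine zpow_mem (zpowers_le.mpr (subset_closure ?_) (hv i)) k
  simp

theorem exists_fin_map_injective_on_fibers {ι α : Type*} [Fintype ι] [DecidableEq α]
    (f : ι → α) {m : ℕ} (hm : ∀ a, (Finset.univ.filter (f · = a)).card ≤ m) :
    ∃ c : ι → Fin m, ∀ i j, f i = f j → c i = c j → i = j := by
  let e : ∀ a, {i // f i = a} ↪ Fin m := fun a =>
    (Function.Embedding.nonempty_of_card_le (by simpa [Fintype.card_subtype] using hm a)).some
  refine ⟨fun i => e (f i) ⟨i, rfl⟩, fun i j hij hc => ?_⟩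
  have key : ∀ a i (h : f i = a), e (f i) ⟨i, rfl⟩ = e a ⟨i, h⟩ := by
    rintro a i rfl
    rfl
  simp only at hc
  rw [key _ i hij] at hc
  exact congrArg Subtype.val ((e (f j)).injective hc)

theorem CommGroup.exists_mulEquiv_pi_zmod_primePow (G : Type*) [CommGroup G] [Finite G] :
    ∃ (ι : Type) (_ : Fintype ι) (p e : ι → ℕ), (∀ i, (p i).Prime) ∧ (∀ i, e i ≠ 0) ∧
      Nonempty (G ≃* ∀ i, Multiplicative (ZMod (p i ^ e i))) := by
  classical
  obtain ⟨ι, _, p, hp, e, ⟨f⟩⟩ := AddCommGroup.equiv_directSum_zmod_of_finite (Additive G)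
  let f' : G ≃* ∀ i, Multiplicative (ZMod (p i ^ e i)) :=
    MulEquiv.toAdditive.symm <| f.trans <|
      (DirectSum.addEquivProd _).trans (MulEquiv.piMultiplicative _).toAdditiveRight
  refine ⟨{i // e i ≠ 0}, inferInstance, fun i => p i, fun i => e i, fun i => hp i,
    fun i => i.2, ⟨f'.trans ?_⟩⟩
  exact
    { toFun := fun x i => x i
      invFun := fun y i => if h : e i = 0 then 1 else y ⟨i, h⟩
      left_inv := fun x => funext fun i => by
        by_cases h : e i = 0
        · have : Subsingleton (ZMod (p i ^ e i)) := by rw [h, pow_zero]; infer_instance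
          exact Subsingleton.elim _ _
        · simp [h]
      right_inv := fun y => funext fun i => by simp [i.2]
      map_mul' := fun _ _ => rfl }

theorem exists_rank_pi_zmod_le_card_filter {ι : Type} [Fintype ι] {p e : ι → ℕ}
    [∀ i, NeZero (p i ^ e i)] (hp : ∀ i, (p i).Prime) :
    ∃ q, Group.rank (∀ i, Multiplicative (ZMod (p i ^ e i))) ≤
      (Finset.univ.filter (p · = q)).card := by
  classical
  by_contra! h
  obtain ⟨c, hc⟩ := exists_fin_map_injective_on_fibers p fun q => Nat.le_sub_one_of_lt (h q)
  have hrank := Group.rank_pi_le_of_coloring (M := fun i => Multiplicative (ZMod (p i ^ e i))) c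
    fun i j hij hcij => by
      simpa using Nat.Coprime.pow _ _
        ((Nat.coprime_primes (hp i) (hp j)).mpr fun hpij => hij (hc i j hpij hcij))
  have := h 0
  omega

theorem not_isTotallyKClosed_rank_pi_zmod {ι : Type} [Fintype ι] {p e : ι → ℕ}
    [∀ i, NeZero (p i ^ e i)] (hp : ∀ i, (p i).Prime) (he : ∀ i, e i ≠ 0)
    [Nontrivial (∀ i, Multiplicative (ZMod (p i ^ e i)))] :
    ¬ IsTotallyKClosed (Group.rank (∀ i, Multiplicative (ZMod (p i ^ e i))))
      (∀ i, Multiplicative (ZMod (p i ^ e i))) := by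
  classical
  obtain ⟨q, hq⟩ := exists_rank_pi_zmod_le_card_filter (e := e) hp
  obtain ⟨T, hTq, hT⟩ := Finset.exists_subset_card_eq hq
  have hTne : T.Nonempty := Finset.card_pos.mp (hT ▸ Group.rank_pos _)
  have hpq : ∀ t : T, p t = q := fun t => (Finset.mem_filter.mp (hTq t.2)).2
  have hdvd : ∀ t : T, q ∣ p t ^ e t := fun t => hpq t ▸ dvd_pow_self _ (he t)
  have : Fact q.Prime := ⟨hpq ⟨_, hTne.choose_spec⟩ ▸ hp _⟩
  rw [← hT]
  exact not_isTotallyKClosed_pi hTne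
    (fun t => (ZMod.castHom (hdvd t) (ZMod q)).toAddMonoidHom.toMultiplicative)
    (fun _ => Multiplicative.ofAdd 1) (c := Multiplicative.ofAdd 1) (by simp)
    fun t => congrArg Multiplicative.ofAdd (map_one (ZMod.castHom (hdvd t) (ZMod q)))

/-- A nontrivial finite abelian group is totally `(n(G)+1)`-closed but not totally
`n(G)`-closed, where `n(G)` is the number of invariant factors (minimal number of
generators). -/
theorem abelian_totallyKClosed_rank (G : Type*) [CommGroup G] [Finite G]
    (h1 : 1 < Nat.card G) :
    IsTotallyKClosed (Group.rank G + 1) G ∧ ¬ IsTotallyKClosed (Group.rank G) G := by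
  refine ⟨isTotallyKClosed_of_cosetHelly (Nat.succ_pos _) (cosetHelly_of_rank_le le_rfl), ?_⟩
  obtain ⟨ι, _, p, e, hp, he, ⟨f⟩⟩ := CommGroup.exists_mulEquiv_pi_zmod_primePow G
  have := Finite.one_lt_card_iff_nontrivial.mp h1
  have := f.symm.nontrivial
  have (i : ι) : NeZero (p i ^ e i) := ⟨pow_ne_zero _ (hp i).ne_zero⟩
  rw [Group.rank_congr f]
  exact fun hG => not_isTotallyKClosed_rank_pi_zmod hp he (hG.of_mulEquiv f)
end
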